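/- Let Λᵢ, Λⱼ be nonnegative random variables with means μᵢ, μⱼ > 0 and finite fourth moments, and suppose Yᵢ and Yⱼ are, conditionally on (Λᵢ, Λⱼ), independent with Yᵢ ~ Poisson(Λᵢ) and Yⱼ ~ Poisson(Λⱼ). Define ψ°ₗ := ((Yₗ − μₗ)² − Yₗ)/μₗ² for ℓ ∈ {i, j}. Then Cov(ψ°ᵢ, ψ°ⱼ) = Cov((Λᵢ − μᵢ)², (Λⱼ − μⱼ)²) / (μᵢ²μⱼ²). In particular, if Λₗ = Ψ·Λ̃ₗ for a constant Ψ > 0 with the joint law of (Λ̃ᵢ, Λ̃ⱼ) independent of Ψ, this covariance does not depend on Ψ. -/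

import Mathlib

/-!
Given `Λ`, a Poisson count `Y` has factorial moments `E[Y | Λ] = Λ` and `E[Y(Y - 1) | Λ] = Λ²`,
so `E[(Y - μ)² - Y | Λ] = (Λ - μ)²`. By conditional independence the conditional expectation of
`((Yᵢ - μᵢ)² - Yᵢ)((Yⱼ - μⱼ)² - Yⱼ)` is `(Λᵢ - μᵢ)²(Λⱼ - μⱼ)²`, so by the tower property the
first and mixed moments, hence the covariances, of the two families agree; finite fourth moments
of `Λ` make every product integrable. Under `Λ = Ψ Λ̃` both `Λ - μ` and `μ` scale by `Ψ`, which
cancels in `(Λ - μ)² / μ²`.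
-/

open MeasureTheory ProbabilityTheory
open scoped NNReal

/-- Covariance of two real random variables. -/
noncomputable def rcov {Ω : Type*} [MeasurableSpace Ω] (P : Measure Ω) (f g : Ω → ℝ) : ℝ :=
  ∫ ω, (f ω - ∫ ω', f ω' ∂P) * (g ω - ∫ ω', g ω' ∂P) ∂P

open Real
open scoped Nat ENNReal

section Moments

variable {Ω : Type*} [MeasurableSpace Ω] {P : Measure Ω}

lemma rcov_eq_covariance (f g : Ω → ℝ) : rcov P f g = cov[f, g; P] := rfl

lemma covariance_div_div (f g : Ω → ℝ) (c d : ℝ) :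
    cov[fun ω => f ω / c, fun ω => g ω / d; P] = cov[f, g; P] / (c * d) := by
  rw [covariance_fun_div_right, covariance_fun_div_left, div_div]

lemma covariance_eq_sub_of_integrable [IsProbabilityMeasure P] {f g : Ω → ℝ}
    (hf : Integrable f P) (hg : Integrable g P) (hfg : Integrable (fun ω => f ω * g ω) P) :
    cov[f, g; P] = ∫ ω, f ω * g ω ∂P - (∫ ω, f ω ∂P) * ∫ ω, g ω ∂P := by
  simp_rw [covariance, sub_mul, mul_sub]
  rw [integral_sub ?_ ?_, integral_sub hfg (hf.mul_const _),
    integral_sub (hg.const_mul _) (integrable_const _), integral_mul_const, integral_const_mul,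
    integral_const, probReal_univ, one_smul]
  · ring
  · exact hfg.sub (hf.mul_const _)
  · exact (hg.const_mul _).sub (integrable_const _)

lemma memLp_two_sq_of_memLp_four {f : Ω → ℝ} (hf : MemLp f 4 P) : MemLp (fun ω => f ω ^ 2) 2 P := by
  refine (memLp_two_iff_integrable_sq (hf.1.pow 2)).2 ?_
  have heven : Even 4 := ⟨2, rfl⟩
  simpa [← pow_mul, heven.pow_abs] using hf.integrable_norm_pow (p := 4) (by norm_num)

lemma sq_sub_integral_div_sq_integral_const_mul {c : ℝ} (hc : c ≠ 0) (f : Ω → ℝ) :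
    (fun ω => (c * f ω - ∫ ω', c * f ω' ∂P) ^ 2 / (∫ ω', c * f ω' ∂P) ^ 2)
      = fun ω => (f ω - ∫ ω', f ω' ∂P) ^ 2 / (∫ ω', f ω' ∂P) ^ 2 := by
  simp_rw [integral_const_mul, ← mul_sub, mul_pow, mul_div_mul_left _ _ (pow_ne_zero 2 hc)]

end Moments

section Poisson

lemma hasSum_descFactorial_poissonMeasure (r : ℝ≥0) (k : ℕ) :
    HasSum (fun n => exp (-r) * r ^ n / n ! * (n.descFactorial k : ℝ)) ((r : ℝ) ^ k) := by
  rw [← hasSum_nat_add_iff' k]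
  have hlow : ∑ n ∈ Finset.range k, exp (-r) * r ^ n / n ! * (n.descFactorial k : ℝ) = 0 :=
    Finset.sum_eq_zero fun n hn => by
      simp [Nat.descFactorial_eq_zero_iff_lt.mpr (Finset.mem_range.mp hn)]
  have hshift : ∀ n, exp (-r) * r ^ (n + k) / (n + k)! * ((n + k).descFactorial k : ℝ)
      = (r : ℝ) ^ k * (exp (-r) * r ^ n / n !) := fun n => by
    have hfac := Nat.factorial_mul_descFactorial (Nat.le_add_left k n)
    rw [Nat.add_sub_cancel] at hfac
    have hdesc : ((n + k).descFactorial k : ℝ) ≠ 0 := by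
      exact_mod_cast (Nat.descFactorial_pos.mpr (Nat.le_add_left k n)).ne'
    rw [← hfac]
    push_cast
    field_simp
    ring
  simpa [hlow, hshift] using (hasSum_one_poissonMeasure r).mul_left ((r : ℝ) ^ k)

lemma integrable_descFactorial_poissonMeasure (r : ℝ≥0) (k : ℕ) :
    Integrable (fun n : ℕ => (n.descFactorial k : ℝ)) (poissonMeasure r) :=
  integrable_poissonMeasure_iff.2 <| by
    simpa using (hasSum_descFactorial_poissonMeasure r k).summable

lemma integral_descFactorial_poissonMeasure (r : ℝ≥0) (k : ℕ) :
    ∫ n, (n.descFactorial k : ℝ) ∂poissonMeasure r = (r : ℝ) ^ k := by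
  rw [integral_poissonMeasure]
  simpa using (hasSum_descFactorial_poissonMeasure r k).tsum_eq

lemma sq_sub_sub_self_eq_descFactorial (μ : ℝ) (n : ℕ) :
    ((n : ℝ) - μ) ^ 2 - n = n.descFactorial 2 - 2 * μ * n.descFactorial 1 + μ ^ 2 := by
  rw [Nat.cast_descFactorial_two, Nat.descFactorial_one]
  ring

lemma integrable_sq_sub_sub_self_poissonMeasure (μ : ℝ) (r : ℝ≥0) :
    Integrable (fun n : ℕ => ((n : ℝ) - μ) ^ 2 - n) (poissonMeasure r) := by
  simp_rw [sq_sub_sub_self_eq_descFactorial]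
  exact ((integrable_descFactorial_poissonMeasure r 2).sub
    ((integrable_descFactorial_poissonMeasure r 1).const_mul _)).add (integrable_const _)

lemma integral_sq_sub_sub_self_poissonMeasure (μ : ℝ) (r : ℝ≥0) :
    ∫ n, (((n : ℝ) - μ) ^ 2 - n) ∂poissonMeasure r = ((r : ℝ) - μ) ^ 2 := by
  have h2 := integrable_descFactorial_poissonMeasure r 2
  have h1 := (integrable_descFactorial_poissonMeasure r 1).const_mul (2 * μ)
  simp_rw [sq_sub_sub_self_eq_descFactorial]
  rw [integral_add ?_ (integrable_const _), integral_sub h2 h1, integral_const_mul,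
    integral_descFactorial_poissonMeasure, integral_descFactorial_poissonMeasure, integral_const,
    probReal_univ, one_smul]
  · ring
  · exact h2.sub h1

lemma lintegral_enorm_sq_sub_sub_self_poissonMeasure_le (μ : ℝ) (r : ℝ≥0) :
    ∫⁻ n, ‖((n : ℝ) - μ) ^ 2 - n‖ₑ ∂poissonMeasure r ≤ ‖((r : ℝ) + |μ|) ^ 2‖ₑ := by
  have h2 := integrable_descFactorial_poissonMeasure r 2
  have h1 := (integrable_descFactorial_poissonMeasure r 1).const_mul (2 * |μ|)
  rw [← ofReal_integral_norm_eq_lintegral_enorm (integrable_sq_sub_sub_self_poissonMeasure μ r),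
    Real.enorm_of_nonneg (sq_nonneg _)]
  refine ENNReal.ofReal_le_ofReal ?_
  calc ∫ n, ‖((n : ℝ) - μ) ^ 2 - n‖ ∂poissonMeasure r
      ≤ ∫ n, ((n.descFactorial 2 : ℝ) + 2 * |μ| * n.descFactorial 1 + μ ^ 2) ∂poissonMeasure r := by
        refine integral_mono (integrable_sq_sub_sub_self_poissonMeasure μ r).norm
          ((h2.add h1).add (integrable_const _)) fun n => ?_
        have hd2 : (0 : ℝ) ≤ n.descFactorial 2 := Nat.cast_nonneg _
        have hd1 : (0 : ℝ) ≤ n.descFactorial 1 := Nat.cast_nonneg _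
        rw [sq_sub_sub_self_eq_descFactorial, Real.norm_eq_abs, abs_le]
        constructor <;> nlinarith [abs_nonneg μ, neg_abs_le μ, le_abs_self μ]
    _ = ((r : ℝ) + |μ|) ^ 2 := by
        rw [integral_add ?_ (integrable_const _), integral_add h2 h1, integral_const_mul,
          integral_descFactorial_poissonMeasure, integral_descFactorial_poissonMeasure,
          integral_const, probReal_univ, one_smul]
        · linear_combination (sq_abs μ).symm
        · exact h2.add h1

end Poisson

section Disintegration

variable {Ω α β : Type*} [MeasurableSpace Ω] [MeasurableSpace α] [MeasurableSpace β]
  [StandardBorelSpace β] [Nonempty β] {P : Measure Ω} [IsFiniteMeasure P]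
  {X : Ω → α} {Y : Ω → β} {κ : α → Measure β}

lemma lintegral_comp_eq_of_condDistrib_ae_eq (hX : Measurable X) (hY : Measurable Y)
    (hκ : ∀ᵐ ω ∂P, condDistrib Y X P (X ω) = κ (X ω)) {f : β → ℝ≥0∞} (hf : Measurable f) :
    ∫⁻ ω, f (Y ω) ∂P = ∫⁻ ω, ∫⁻ y, f y ∂κ (X ω) ∂P := by
  have hfY : Measurable fun z : α × β => f z.2 := hf.comp measurable_snd
  calc ∫⁻ ω, f (Y ω) ∂P = ∫⁻ z, f z.2 ∂(P.map fun ω => (X ω, Y ω)) :=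
        (lintegral_map hfY (hX.prodMk hY)).symm
    _ = ∫⁻ ω, ∫⁻ y, f y ∂condDistrib Y X P (X ω) ∂P := by
        rw [← compProd_map_condDistrib hY.aemeasurable, Measure.lintegral_compProd hfY,
          lintegral_map (Measurable.lintegral_kernel_prod_right' hfY) hX]
    _ = ∫⁻ ω, ∫⁻ y, f y ∂κ (X ω) ∂P := lintegral_congr_ae (hκ.mono fun ω hω => by simp only [hω])

lemma integral_comp_eq_of_condDistrib_ae_eq (hX : Measurable X) (hY : Measurable Y)
    (hκ : ∀ᵐ ω ∂P, condDistrib Y X P (X ω) = κ (X ω)) {f : β → ℝ} (hf : StronglyMeasurable f)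
    (hfY : Integrable (fun ω => f (Y ω)) P) :
    ∫ ω, f (Y ω) ∂P = ∫ ω, ∫ y, f y ∂κ (X ω) ∂P := by
  rw [← integral_condExp hX.comap_le]
  refine integral_congr_ae ?_
  filter_upwards [condExp_ae_eq_integral_condDistrib hX hY.aemeasurable hf hfY, hκ] with ω h hω
  rw [h, hω]

end Disintegration

section PoissonMixture

def CondIndepPoisson {Ω : Type*} [MeasurableSpace Ω] (Yi Yj : Ω → ℕ) (Λi Λj : Ω → ℝ≥0)
    (P : Measure Ω) [IsFiniteMeasure P] : Prop :=
  ∀ᵐ ω ∂P, condDistrib (fun ω' => (Yi ω', Yj ω')) (fun ω' => (Λi ω', Λj ω')) P (Λi ω, Λj ω)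
    = (poissonMeasure (Λi ω)).prod (poissonMeasure (Λj ω))

variable {Ω : Type*} [MeasurableSpace Ω] {P : Measure Ω} [IsFiniteMeasure P]
  {Λi Λj : Ω → ℝ≥0} {Yi Yj : Ω → ℕ}

lemma CondIndepPoisson.lintegral_mul_comp (hcond : CondIndepPoisson Yi Yj Λi Λj P)
    (hΛi : Measurable Λi) (hΛj : Measurable Λj) (hYi : Measurable Yi) (hYj : Measurable Yj)
    (g h : ℕ → ℝ≥0∞) :
    ∫⁻ ω, g (Yi ω) * h (Yj ω) ∂P
      = ∫⁻ ω, (∫⁻ m, g m ∂poissonMeasure (Λi ω)) * ∫⁻ n, h n ∂poissonMeasure (Λj ω) ∂P := by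
  have hdis := lintegral_comp_eq_of_condDistrib_ae_eq (P := P) (f := fun y => g y.1 * h y.2)
    (κ := fun x => (poissonMeasure x.1).prod (poissonMeasure x.2)) (hΛi.prodMk hΛj)
    (hYi.prodMk hYj)
  refine (hdis hcond (measurable_of_countable _)).trans ?_
  exact lintegral_congr fun ω => lintegral_prod_mul (measurable_of_countable g).aemeasurable
    (measurable_of_countable h).aemeasurable

lemma CondIndepPoisson.integral_mul_comp (hcond : CondIndepPoisson Yi Yj Λi Λj P)
    (hΛi : Measurable Λi) (hΛj : Measurable Λj) (hYi : Measurable Yi) (hYj : Measurable Yj)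
    {f g : ℕ → ℝ} (hint : Integrable (fun ω => f (Yi ω) * g (Yj ω)) P) :
    ∫ ω, f (Yi ω) * g (Yj ω) ∂P
      = ∫ ω, (∫ m, f m ∂poissonMeasure (Λi ω)) * ∫ n, g n ∂poissonMeasure (Λj ω) ∂P := by
  have hdis := integral_comp_eq_of_condDistrib_ae_eq (P := P) (f := fun y => f y.1 * g y.2)
    (κ := fun x => (poissonMeasure x.1).prod (poissonMeasure x.2)) (hΛi.prodMk hΛj)
    (hYi.prodMk hYj)
  refine (hdis hcond (measurable_of_countable _).stronglyMeasurable hint).trans ?_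
  exact integral_congr_ae (ae_of_all _ fun ω => integral_prod_mul f g)

lemma CondIndepPoisson.integrable_mul_comp (hcond : CondIndepPoisson Yi Yj Λi Λj P)
    (hΛi : Measurable Λi) (hΛj : Measurable Λj) (hYi : Measurable Yi) (hYj : Measurable Yj)
    {f g : ℕ → ℝ} {F G : ℝ≥0 → ℝ}
    (hf : ∀ r, ∫⁻ m, ‖f m‖ₑ ∂poissonMeasure r ≤ ‖F r‖ₑ)
    (hg : ∀ r, ∫⁻ n, ‖g n‖ₑ ∂poissonMeasure r ≤ ‖G r‖ₑ)
    (hFG : Integrable (fun ω => F (Λi ω) * G (Λj ω)) P) :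
    Integrable (fun ω => f (Yi ω) * g (Yj ω)) P := by
  refine ⟨(((measurable_of_countable f).comp hYi).mul
    ((measurable_of_countable g).comp hYj)).aestronglyMeasurable, ?_⟩
  calc ∫⁻ ω, ‖f (Yi ω) * g (Yj ω)‖ₑ ∂P
      = ∫⁻ ω, (∫⁻ m, ‖f m‖ₑ ∂poissonMeasure (Λi ω)) * ∫⁻ n, ‖g n‖ₑ ∂poissonMeasure (Λj ω) ∂P := by
        simp_rw [enorm_mul]
        exact hcond.lintegral_mul_comp hΛi hΛj hYi hYj (fun m => ‖f m‖ₑ) (fun n => ‖g n‖ₑ)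
    _ ≤ ∫⁻ ω, ‖F (Λi ω) * G (Λj ω)‖ₑ ∂P :=
        lintegral_mono fun ω => by rw [enorm_mul]; exact mul_le_mul' (hf _) (hg _)
    _ < ∞ := hFG.hasFiniteIntegral

theorem CondIndepPoisson.covariance_sq_sub_sub_self [IsProbabilityMeasure P]
    (hcond : CondIndepPoisson Yi Yj Λi Λj P)
    (hΛi : Measurable Λi) (hΛj : Measurable Λj) (hYi : Measurable Yi) (hYj : Measurable Yj)
    (hmomi : MemLp (fun ω => (Λi ω : ℝ)) 4 P) (hmomj : MemLp (fun ω => (Λj ω : ℝ)) 4 P)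
    (μi μj : ℝ) :
    cov[fun ω => ((Yi ω : ℝ) - μi) ^ 2 - Yi ω, fun ω => ((Yj ω : ℝ) - μj) ^ 2 - Yj ω; P]
      = cov[fun ω => ((Λi ω : ℝ) - μi) ^ 2, fun ω => ((Λj ω : ℝ) - μj) ^ 2; P] := by
  have hBi : MemLp (fun ω => ((Λi ω : ℝ) - μi) ^ 2) 2 P :=
    memLp_two_sq_of_memLp_four (hmomi.sub (memLp_const μi))
  have hBj : MemLp (fun ω => ((Λj ω : ℝ) - μj) ^ 2) 2 P :=
    memLp_two_sq_of_memLp_four (hmomj.sub (memLp_const μj))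
  have hFi : MemLp (fun ω => ((Λi ω : ℝ) + |μi|) ^ 2) 2 P :=
    memLp_two_sq_of_memLp_four (hmomi.add (memLp_const |μi|))
  have hFj : MemLp (fun ω => ((Λj ω : ℝ) + |μj|) ^ 2) 2 P :=
    memLp_two_sq_of_memLp_four (hmomj.add (memLp_const |μj|))
  have hone : ∀ r, ∫⁻ _n, ‖(1 : ℝ)‖ₑ ∂poissonMeasure r ≤ ‖(1 : ℝ)‖ₑ := fun r => by simp
  have hint := hcond.integrable_mul_comp hΛi hΛj hYi hYj
    (lintegral_enorm_sq_sub_sub_self_poissonMeasure_le μi)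
    (lintegral_enorm_sq_sub_sub_self_poissonMeasure_le μj) (hFi.integrable_mul hFj)
  have hinti := hcond.integrable_mul_comp hΛi hΛj hYi hYj
    (lintegral_enorm_sq_sub_sub_self_poissonMeasure_le μi) hone
    (by simpa using hFi.integrable one_le_two)
  have hintj := hcond.integrable_mul_comp hΛi hΛj hYi hYj hone
    (lintegral_enorm_sq_sub_sub_self_poissonMeasure_le μj)
    (by simpa using hFj.integrable one_le_two)
  -- the marginal moments are the mixed ones with the other factor equal to `1`
  simp only [mul_one, one_mul] at hinti hintj
  rw [covariance_eq_sub_of_integrable hinti hintj hint,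
    covariance_eq_sub_of_integrable (hBi.integrable one_le_two) (hBj.integrable one_le_two)
      (hBi.integrable_mul hBj)]
  have hone_int : ∀ r, ∫ _n, (1 : ℝ) ∂poissonMeasure r = 1 := fun r => by simp
  have hEij := hcond.integral_mul_comp hΛi hΛj hYi hYj
    (f := fun n => ((n : ℝ) - μi) ^ 2 - n) (g := fun n => ((n : ℝ) - μj) ^ 2 - n) hint
  have hEi := hcond.integral_mul_comp hΛi hΛj hYi hYj
    (f := fun n => ((n : ℝ) - μi) ^ 2 - n) (g := fun _ => 1) (by simpa using hinti)
  have hEj := hcond.integral_mul_comp hΛi hΛj hYi hYj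
    (f := fun _ => 1) (g := fun n => ((n : ℝ) - μj) ^ 2 - n) (by simpa using hintj)
  simp only [integral_sq_sub_sub_self_poissonMeasure, hone_int, mul_one, one_mul] at hEij hEi hEj
  rw [hEij, hEi, hEj]

end PoissonMixture

theorem oracle_psi_offdiag_covariance_general
    {Ω : Type*} [MeasurableSpace Ω] {P : Measure Ω} [IsProbabilityMeasure P]
    (Λi Λj : Ω → ℝ≥0) (Yi Yj : Ω → ℕ)
    (hΛi : Measurable Λi) (hΛj : Measurable Λj)
    (hYi : Measurable Yi) (hYj : Measurable Yj)
    (hmomi : MemLp (fun ω => (Λi ω : ℝ)) 4 P)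
    (hmomj : MemLp (fun ω => (Λj ω : ℝ)) 4 P)
    (hcond : ∀ᵐ ω ∂P,
      condDistrib (fun ω' => (Yi ω', Yj ω')) (fun ω' => (Λi ω', Λj ω')) P (Λi ω, Λj ω)
        = (poissonMeasure (Λi ω)).prod (poissonMeasure (Λj ω))) :
    rcov P
        (fun ω => (((Yi ω : ℝ) - ∫ ω', (Λi ω' : ℝ) ∂P) ^ 2 - (Yi ω : ℝ))
            / (∫ ω', (Λi ω' : ℝ) ∂P) ^ 2)
        (fun ω => (((Yj ω : ℝ) - ∫ ω', (Λj ω' : ℝ) ∂P) ^ 2 - (Yj ω : ℝ))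
            / (∫ ω', (Λj ω' : ℝ) ∂P) ^ 2)
      = rcov P
          (fun ω => ((Λi ω : ℝ) - ∫ ω', (Λi ω' : ℝ) ∂P) ^ 2)
          (fun ω => ((Λj ω : ℝ) - ∫ ω', (Λj ω' : ℝ) ∂P) ^ 2)
        / ((∫ ω, (Λi ω : ℝ) ∂P) ^ 2 * (∫ ω, (Λj ω : ℝ) ∂P) ^ 2) ∧
    ∀ (Ψ : ℝ≥0) (Λti Λtj : Ω → ℝ≥0), 0 < Ψ →
      (∀ ω, Λi ω = Ψ * Λti ω) → (∀ ω, Λj ω = Ψ * Λtj ω) →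
      rcov P
          (fun ω => (((Yi ω : ℝ) - ∫ ω', (Λi ω' : ℝ) ∂P) ^ 2 - (Yi ω : ℝ))
              / (∫ ω', (Λi ω' : ℝ) ∂P) ^ 2)
          (fun ω => (((Yj ω : ℝ) - ∫ ω', (Λj ω' : ℝ) ∂P) ^ 2 - (Yj ω : ℝ))
              / (∫ ω', (Λj ω' : ℝ) ∂P) ^ 2)
        = rcov P
            (fun ω => ((Λti ω : ℝ) - ∫ ω', (Λti ω' : ℝ) ∂P) ^ 2)
            (fun ω => ((Λtj ω : ℝ) - ∫ ω', (Λtj ω' : ℝ) ∂P) ^ 2)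
          / ((∫ ω, (Λti ω : ℝ) ∂P) ^ 2 * (∫ ω, (Λtj ω : ℝ) ∂P) ^ 2) := by
  simp only [rcov_eq_covariance, covariance_div_div,
    CondIndepPoisson.covariance_sq_sub_sub_self hcond hΛi hΛj hYi hYj hmomi hmomj, true_and]
  intro Ψ Λti Λtj hΨ hi hj
  conv_lhs => rw [← covariance_div_div]
  simp only [hi, hj, NNReal.coe_mul, covariance_div_div,
    sq_sub_integral_div_sq_integral_const_mul (NNReal.coe_ne_zero.mpr hΨ.ne')]

/-- Off-diagonal covariance identity for oracle contributions: if `Yᵢ, Yⱼ` are,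
conditionally on `(Λᵢ, Λⱼ)`, independent Poisson with means `Λᵢ, Λⱼ`, then
`Cov(ψ°ᵢ, ψ°ⱼ) = Cov((Λᵢ−μᵢ)², (Λⱼ−μⱼ)²)/(μᵢ²μⱼ²)`. In particular, under the
multiplicative scaling `Λₗ = Ψ·Λ̃ₗ`, this covariance does not depend on `Ψ`. -/
theorem oracle_psi_offdiag_covariance
    {Ω : Type*} [MeasurableSpace Ω] {P : Measure Ω} [IsProbabilityMeasure P]
    (Λi Λj : Ω → ℝ≥0) (Yi Yj : Ω → ℕ)
    (hΛi : Measurable Λi) (hΛj : Measurable Λj)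
    (hYi : Measurable Yi) (hYj : Measurable Yj)
    (hmomi : MemLp (fun ω => (Λi ω : ℝ)) 4 P)
    (hmomj : MemLp (fun ω => (Λj ω : ℝ)) 4 P)
    (hμi : 0 < ∫ ω, (Λi ω : ℝ) ∂P) (hμj : 0 < ∫ ω, (Λj ω : ℝ) ∂P)
    (hcond : ∀ᵐ ω ∂P,
      condDistrib (fun ω' => (Yi ω', Yj ω')) (fun ω' => (Λi ω', Λj ω')) P (Λi ω, Λj ω)
        = (poissonMeasure (Λi ω)).prod (poissonMeasure (Λj ω))) :
    rcov P
        (fun ω => (((Yi ω : ℝ) - ∫ ω', (Λi ω' : ℝ) ∂P) ^ 2 - (Yi ω : ℝ))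
            / (∫ ω', (Λi ω' : ℝ) ∂P) ^ 2)
        (fun ω => (((Yj ω : ℝ) - ∫ ω', (Λj ω' : ℝ) ∂P) ^ 2 - (Yj ω : ℝ))
            / (∫ ω', (Λj ω' : ℝ) ∂P) ^ 2)
      = rcov P
          (fun ω => ((Λi ω : ℝ) - ∫ ω', (Λi ω' : ℝ) ∂P) ^ 2)
          (fun ω => ((Λj ω : ℝ) - ∫ ω', (Λj ω' : ℝ) ∂P) ^ 2)
        / ((∫ ω, (Λi ω : ℝ) ∂P) ^ 2 * (∫ ω, (Λj ω : ℝ) ∂P) ^ 2) ∧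
    ∀ (Ψ : ℝ≥0) (Λti Λtj : Ω → ℝ≥0), 0 < Ψ →
      (∀ ω, Λi ω = Ψ * Λti ω) → (∀ ω, Λj ω = Ψ * Λtj ω) →
      rcov P
          (fun ω => (((Yi ω : ℝ) - ∫ ω', (Λi ω' : ℝ) ∂P) ^ 2 - (Yi ω : ℝ))
              / (∫ ω', (Λi ω' : ℝ) ∂P) ^ 2)
          (fun ω => (((Yj ω : ℝ) - ∫ ω', (Λj ω' : ℝ) ∂P) ^ 2 - (Yj ω : ℝ))
              / (∫ ω', (Λj ω' : ℝ) ∂P) ^ 2)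
        = rcov P
            (fun ω => ((Λti ω : ℝ) - ∫ ω', (Λti ω' : ℝ) ∂P) ^ 2)
            (fun ω => ((Λtj ω : ℝ) - ∫ ω', (Λtj ω' : ℝ) ∂P) ^ 2)
          / ((∫ ω, (Λti ω : ℝ) ∂P) ^ 2 * (∫ ω, (Λtj ω : ℝ) ∂P) ^ 2) :=
  oracle_psi_offdiag_covariance_general Λi Λj Yi Yj hΛi hΛj hYi hYj hmomi hmomj hcond
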